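/- For all y, z ∈ D: ⟨Ly, z⟩ − ⟨y, Lz⟩ = (e^{−2iδ} − 1)·(Δy_{−1})·conj(z_{−1}) − (e^{2iδ} − 1)·y_{−1}·conj(Δz_{−1}), where for w ∈ D one sets w₁ = w_{−1}, w₀ = (1 − e^{2iδ}) w_{−1} + e^{2iδ} w₂, and Δw_{−1} = w₀ − w_{−1}. In particular, if δ = 0 then ⟨Ly, z⟩ = ⟨y, Lz⟩ for all y, z ∈ D. -/

import Mathlib

open ComplexConjugate

/-- The index set ℤ₀ = ℤ \ {0,1} as a subtype. -/
abbrev Z0 := {n : ℤ // n ≠ 0 ∧ n ≠ 1}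

noncomputable def e2 (δ : ℝ) : ℂ := Complex.exp (2 * (δ : ℂ) * Complex.I)

/-- Extension of y : ℤ → ℂ by the auxiliary values y₁ = y_{−1} and
y₀ = (1 − e^{2iδ}) y_{−1} + e^{2iδ} y₂ coming from the impulse conditions. -/
noncomputable def ext (δ : ℝ) (y : ℤ → ℂ) : ℤ → ℂ := fun n =>
  if n = 0 then (1 - e2 δ) * y (-1) + e2 δ * y 2
  else if n = 1 then y (-1)
  else y n

/-- (Ly)_n = −Δ²y_{n−1} + q_n y_n for n ∈ ℤ₀, using the auxiliary values. -/
noncomputable def Lop (δ : ℝ) (q : ℤ → ℝ) (y : ℤ → ℂ) (n : ℤ) : ℂ :=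
  -(ext δ y (n + 1) - 2 * ext δ y n + ext δ y (n - 1)) + (q n : ℂ) * y n

/-- Membership in the domain D = { y ∈ l₀² : (qₙ yₙ) ∈ l₀² }. -/
def MemD (q : ℤ → ℝ) (y : ℤ → ℂ) : Prop :=
  Summable (fun n : Z0 => ‖y (n : ℤ)‖ ^ 2) ∧
  Summable (fun n : Z0 => ‖(q (n : ℤ) : ℂ) * y (n : ℤ)‖ ^ 2)

/-! Summation by parts. Write `Y`, `Z` for `y`, `z` extended by the auxiliary values and
`W m = Y (m+1) conj (Z m) - Y m conj (Z (m+1))` for their Wronskian. Since `q` is real, the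
potential cancels and `(Ly)ₙ conj zₙ - yₙ conj (Lz)ₙ = W (n-1) - W n` on `ℤ₀`. As `Y`, `Z` are
square summable on all of `ℤ`, so is `W`, and `∑_{n ∈ ℤ} (W (n-1) - W n) = 0`; dropping the
terms `n = 0, 1` leaves `W 1 - W (-1)`, which the impulse conditions and `|e^{2iδ}| = 1` turn
into the boundary form. -/

lemma summable_mul_conj_of_summable_sq {ι : Type*} {f g : ι → ℂ}
    (hf : Summable fun i => ‖f i‖ ^ 2) (hg : Summable fun i => ‖g i‖ ^ 2) :
    Summable fun i => f i * conj (g i) := by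
  refine .of_norm_bounded ((hf.add hg).div_const 2) fun i => ?_
  rw [norm_mul, Complex.norm_conj]
  nlinarith [sq_nonneg (‖f i‖ - ‖g i‖)]

lemma Summable.comp_add_right {M : Type*} [AddCommMonoid M] [TopologicalSpace M] {f : ℤ → M}
    (hf : Summable f) (c : ℤ) : Summable fun n => f (n + c) :=
  (Equiv.addRight c).summable_iff.mpr hf

def complZeroOneEquivZ0 : {n : ℤ // n ∉ ({0, 1} : Finset ℤ)} ≃ Z0 :=
  Equiv.subtypeEquivRight fun n => by simp

section IntSums

variable {G : Type*} [AddCommGroup G] [TopologicalSpace G] [IsTopologicalAddGroup G]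

lemma HasSum.comp_sub_one_sub_self {f : ℤ → G} {a : G} (hf : HasSum f a) :
    HasSum (fun n => f (n - 1) - f n) 0 := by
  simpa using ((Equiv.subRight (1 : ℤ)).hasSum_iff.mpr hf).sub hf

lemma HasSum.restrict_Z0 {f : ℤ → G} {a : G} (hf : HasSum f a) :
    HasSum (fun n : Z0 => f n) (a - f 0 - f 1) := by
  rw [← complZeroOneEquivZ0.hasSum_iff]
  refine (Finset.hasSum_compl_iff {0, 1}).mpr ?_
  convert hf using 1
  simp

end IntSums

section Impulse

variable {δ : ℝ} {q : ℤ → ℝ} {y z : ℤ → ℂ}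

@[simp]
lemma ext_coe (n : Z0) : ext δ y n = y n := by
  simp [ext, n.2.1, n.2.2]

lemma summable_sq_ext (hy : Summable fun n : Z0 => ‖y n‖ ^ 2) :
    Summable fun n => ‖ext δ y n‖ ^ 2 := by
  rw [← Finset.summable_compl_iff {0, 1}, ← complZeroOneEquivZ0.symm.summable_iff]
  exact hy.congr fun n => by simp [complZeroOneEquivZ0]

def wronskian (Y Z : ℤ → ℂ) (m : ℤ) : ℂ :=
  Y (m + 1) * conj (Z m) - Y m * conj (Z (m + 1))

lemma summable_wronskian_ext (hy : Summable fun n : Z0 => ‖y n‖ ^ 2)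
    (hz : Summable fun n : Z0 => ‖z n‖ ^ 2) :
    Summable (wronskian (ext δ y) (ext δ z)) := by
  have hY := summable_sq_ext (δ := δ) hy
  have hZ := summable_sq_ext (δ := δ) hz
  exact (summable_mul_conj_of_summable_sq (hY.comp_add_right 1) hZ).sub
    (summable_mul_conj_of_summable_sq hY (hZ.comp_add_right 1))

lemma summable_Lop_mul_conj (hy : MemD q y) (hz : Summable fun n : Z0 => ‖z n‖ ^ 2) :
    Summable fun n : Z0 => Lop δ q y n * conj (z n) := by
  have hY (c : ℤ) : Summable fun n : Z0 => ‖ext δ y (n + c)‖ ^ 2 :=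
    ((summable_sq_ext hy.1).comp_add_right c).subtype _
  have h (c : ℤ) := summable_mul_conj_of_summable_sq (hY c) hz
  refine ((((h 1).neg.add ((h 0).mul_left 2)).sub (h (-1))).add
    (summable_mul_conj_of_summable_sq hy.2 hz)).congr fun n => ?_
  simp only [Lop, add_zero, ← sub_eq_add_neg]
  ring

lemma Lop_mul_conj_sub_mul_conj_Lop (n : Z0) :
    Lop δ q y n * conj (z n) - y n * conj (Lop δ q z n) =
      wronskian (ext δ y) (ext δ z) (n - 1) - wronskian (ext δ y) (ext δ z) n := by
  simp only [Lop, wronskian, map_add, map_sub, map_neg, map_mul, map_ofNat,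
    Complex.conj_ofReal, sub_add_cancel]
  rw [← ext_coe (δ := δ) (y := y) n, ← ext_coe (δ := δ) (y := z) n]
  ring

lemma tsum_Lop_mul_conj_sub_mul_conj_Lop (hy : Summable fun n : Z0 => ‖y n‖ ^ 2)
    (hz : Summable fun n : Z0 => ‖z n‖ ^ 2) :
    ∑' n : Z0, (Lop δ q y n * conj (z n) - y n * conj (Lop δ q z n)) =
      wronskian (ext δ y) (ext δ z) 1 - wronskian (ext δ y) (ext δ z) (-1) := by
  rw [tsum_congr Lop_mul_conj_sub_mul_conj_Lop,
    (summable_wronskian_ext hy hz).hasSum.comp_sub_one_sub_self.restrict_Z0.tsum_eq]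
  norm_num

end Impulse

lemma conj_e2 (δ : ℝ) : conj (e2 δ) = Complex.exp (-(2 * δ) * Complex.I) := by
  rw [e2, ← Complex.exp_conj]
  simp [map_ofNat]

lemma conj_e2_mul_e2 (δ : ℝ) : conj (e2 δ) * e2 δ = 1 := by
  rw [conj_e2, e2, ← Complex.exp_add]
  simp

lemma wronskian_ext_one_sub_wronskian_ext_neg_one (δ : ℝ) (y z : ℤ → ℂ) :
    wronskian (ext δ y) (ext δ z) 1 - wronskian (ext δ y) (ext δ z) (-1) =
      (conj (e2 δ) - 1) * (ext δ y 0 - y (-1)) * conj (z (-1)) -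
        (e2 δ - 1) * y (-1) * conj (ext δ z 0 - z (-1)) := by
  simp only [wronskian, ext, map_sub]
  norm_num
  linear_combination (y (-1) * conj (z 2) - y 2 * conj (z (-1))) * conj_e2_mul_e2 δ

theorem L_nonhermitian_formula_general (δ : ℝ)
    (q : ℤ → ℝ) (y z : ℤ → ℂ) (hy : MemD q y) (hz : MemD q z) :
    ((∑' n : Z0, Lop δ q y (n : ℤ) * conj (z (n : ℤ))) -
        ∑' n : Z0, y (n : ℤ) * conj (Lop δ q z (n : ℤ))) =
      (Complex.exp (-(2 * (δ : ℂ)) * Complex.I) - 1) * (ext δ y 0 - y (-1)) * conj (z (-1)) -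
        (e2 δ - 1) * y (-1) * conj (ext δ z 0 - z (-1)) ∧
    (δ = 0 →
      (∑' n : Z0, Lop δ q y (n : ℤ) * conj (z (n : ℤ))) =
        ∑' n : Z0, y (n : ℤ) * conj (Lop δ q z (n : ℤ))) := by
  have hyz : Summable fun n : Z0 => y n * conj (Lop δ q z n) := by
    simpa [mul_comm] using Complex.summable_conj.mpr (summable_Lop_mul_conj (δ := δ) hz hy.1)
  have formula := (summable_Lop_mul_conj (δ := δ) hy hz.1).tsum_sub hyz
  rw [tsum_Lop_mul_conj_sub_mul_conj_Lop hy.1 hz.1,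
    wronskian_ext_one_sub_wronskian_ext_neg_one, conj_e2] at formula
  refine ⟨formula.symm, fun hδ => ?_⟩
  subst hδ
  simpa [e2, sub_eq_zero] using formula.symm

/-- for all y, z ∈ D,
⟨Ly, z⟩ − ⟨y, Lz⟩ = (e^{−2iδ} − 1)(Δy_{−1}) conj(z_{−1}) − (e^{2iδ} − 1) y_{−1} conj(Δz_{−1});
in particular L is Hermitian when δ = 0. -/
theorem L_nonhermitian_formula (δ : ℝ) (hδ : 0 ≤ δ ∧ δ < Real.pi / 2)
    (q : ℤ → ℝ) (y z : ℤ → ℂ) (hy : MemD q y) (hz : MemD q z) :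
    ((∑' n : Z0, Lop δ q y (n : ℤ) * conj (z (n : ℤ))) -
        ∑' n : Z0, y (n : ℤ) * conj (Lop δ q z (n : ℤ))) =
      (Complex.exp (-(2 * (δ : ℂ)) * Complex.I) - 1) * (ext δ y 0 - y (-1)) * conj (z (-1)) -
        (e2 δ - 1) * y (-1) * conj (ext δ z 0 - z (-1)) ∧
    (δ = 0 →
      (∑' n : Z0, Lop δ q y (n : ℤ) * conj (z (n : ℤ))) =
        ∑' n : Z0, y (n : ℤ) * conj (Lop δ q z (n : ℤ))) :=
  L_nonhermitian_formula_general δ q y z hy hz
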